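/- arXiv:2508.14265 — 2 statements merged into one kernel-verified Lean document; each statement's English description precedes it below -/
import Mathlib

section
/- Let φ : F₂^(m+k) → F₂^(m-k) (0 < k < m) satisfy (P₁*) and let f(x,y) = x·φ(y) + h(y) on F₂^(m-k) × F₂^(m+k). Then V = F₂^(m-k) × {0} is the unique M-subspace of f of dimension m-k if and only if there is no nonzero b₂ ∈ F₂^(m+k) and (m-k-1)-dimensional subspace U ⊆ F₂^(m-k) such that u·D_{b₂}φ(y) = 0 for all u ∈ U and all y ∈ F₂^(m+k). -/
/-!
The second derivative of `f` in directions `(a₁, a₂)`, `(b₁, b₂)` is affine in `x`, with linear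
part `x · D_{a₂} D_{b₂} φ(y)`. Hence on an M-subspace `V` every `D_{a₂} D_{b₂} φ` vanishes, and
`(P₁*)` forces the projection of `V` to the second factor to have dimension at most one. If it is
zero, `V` lies in `F₂^(m-k) × {0}` and equals it by dimension. If it is spanned by `b₂ ≠ 0`,
rank-nullity gives `U = {u | (u, 0) ∈ V}` dimension `m-k-1`, and `u · D_{b₂}φ = 0` on `U`.
Conversely, such `b₂` and `U` make `U × ⟨b₂⟩` an M-subspace of dimension `m-k` other than
`F₂^(m-k) × {0}`.
-/

open Finset

/-- Dot product on `F₂^k`. -/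
def dotp {k : ℕ} (x y : Fin k → ZMod 2) : ZMod 2 := ∑ i, x i * y i

/-- The character `z ↦ (-1)^z`. -/
def chr (z : ZMod 2) : ℤ := (-1 : ℤ) ^ z.val

/-- Walsh–Hadamard transform of a Boolean function on `F₂^p × F₂^q`. -/
def walshP {p q : ℕ} (f : (Fin p → ZMod 2) × (Fin q → ZMod 2) → ZMod 2)
    (a : Fin p → ZMod 2) (b : Fin q → ZMod 2) : ℤ :=
  ∑ x : Fin p → ZMod 2, ∑ y : Fin q → ZMod 2, chr (f (x, y) + dotp a x + dotp b y)

/-- `S` is a 2-dimensional affine subspace (flat) of `F₂^k`. -/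
def Is2Flat {k : ℕ} (S : Set (Fin k → ZMod 2)) : Prop :=
  ∃ (c : Fin k → ZMod 2) (W : Submodule (ZMod 2) (Fin k → ZMod 2)),
    Module.finrank (ZMod 2) ↥W = 2 ∧ S = (fun w => c + w) '' (W : Set (Fin k → ZMod 2))

/-- `V` is an M-subspace of `f`: all second-order derivatives along `V` vanish. -/
def IsMSub {p q : ℕ} (f : (Fin p → ZMod 2) × (Fin q → ZMod 2) → ZMod 2)
    (V : Submodule (ZMod 2) ((Fin p → ZMod 2) × (Fin q → ZMod 2))) : Prop :=
  ∀ a ∈ V, ∀ b ∈ V, ∀ x, f x + f (x + a) + f (x + b) + f (x + a + b) = 0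

/-- Property `(P₁*)`. -/
def P1star {p q : ℕ} (φ : (Fin p → ZMod 2) → (Fin q → ZMod 2)) : Prop :=
  ∀ v w : Fin p → ZMod 2, LinearIndependent (ZMod 2) ![v, w] →
    ∃ y, φ y + φ (y + v) + φ (y + w) + φ (y + v + w) ≠ 0

lemma dotp_add_left {n : ℕ} (x y z : Fin n → ZMod 2) : dotp (x + y) z = dotp x z + dotp y z :=
  add_dotProduct x y z

lemma dotp_add_right {n : ℕ} (x y z : Fin n → ZMod 2) : dotp x (y + z) = dotp x y + dotp x z :=
  dotProduct_add x y z

lemma dotp_zero_left {n : ℕ} (y : Fin n → ZMod 2) : dotp 0 y = 0 :=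
  zero_dotProduct y

lemma eq_zero_of_forall_dotp_eq_zero {n : ℕ} {v : Fin n → ZMod 2} (h : ∀ x, dotp x v = 0) :
    v = 0 :=
  dotProduct_eq_zero v fun x => by rw [dotProduct_comm]; exact h x

lemma ZMod.eq_zero_or_eq_one (s : ZMod 2) : s = 0 ∨ s = 1 := by
  decide +revert

section Prod

variable {K M N : Type*} [DivisionRing K] [AddCommGroup M] [Module K M] [AddCommGroup N]
  [Module K N]

theorem Submodule.finrank_map_snd_add_finrank_comap_inl [FiniteDimensional K M]
    [FiniteDimensional K N] (V : Submodule K (M × N)) :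
    Module.finrank K (V.map (LinearMap.snd K M N)) +
        Module.finrank K (V.comap (LinearMap.inl K M N)) = Module.finrank K V := by
  have hV := ((LinearMap.snd K M N).domRestrict V).finrank_range_add_finrank_ker
  rw [LinearMap.range_domRestrict, LinearMap.ker_domRestrict, ← Submodule.finrank_map_subtype_eq,
    Submodule.map_comap_subtype] at hV
  rwa [(Submodule.equivMapOfInjective (LinearMap.inl K M N) LinearMap.inl_injective _).finrank_eq,
    Submodule.map_comap_eq, LinearMap.range_inl, inf_comm]

theorem Submodule.eq_comap_inl_prod_bot {V : Submodule K (M × N)}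
    (hV : V.map (LinearMap.snd K M N) = ⊥) : V = (V.comap (LinearMap.inl K M N)).prod ⊥ := by
  ext ⟨x, y⟩
  refine ⟨fun hxy => ?_, fun ⟨hx, hy⟩ => ?_⟩
  · obtain rfl : y = 0 := (Submodule.mem_bot K).1 (hV ▸ ⟨_, hxy, rfl⟩)
    exact ⟨hxy, rfl⟩
  · obtain rfl : y = 0 := (Submodule.mem_bot K).1 hy
    exact hx

end Prod

section Quadratic

variable {p q : ℕ} {φ : (Fin q → ZMod 2) → (Fin p → ZMod 2)} {h : (Fin q → ZMod 2) → ZMod 2}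
  {f : (Fin p → ZMod 2) × (Fin q → ZMod 2) → ZMod 2}

lemma secondDeriv_eq_dotp_add (hf : ∀ x y, f (x, y) = dotp x (φ y) + h y)
    (x : Fin p → ZMod 2) (y : Fin q → ZMod 2) (a b : (Fin p → ZMod 2) × (Fin q → ZMod 2)) :
    f (x, y) + f ((x, y) + a) + f ((x, y) + b) + f ((x, y) + a + b) =
      dotp x (φ y + φ (y + a.2) + φ (y + b.2) + φ (y + a.2 + b.2)) +
        (f (0, y) + f ((0, y) + a) + f ((0, y) + b) + f ((0, y) + a + b)) := by
  obtain ⟨a₁, a₂⟩ := a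
  obtain ⟨b₁, b₂⟩ := b
  simp only [Prod.mk_add_mk, hf, dotp_add_left, dotp_add_right, dotp_zero_left, zero_add]
  ring

lemma secondDeriv_smul_eq (hf : ∀ x y, f (x, y) = dotp x (φ y) + h y)
    (x u u' : Fin p → ZMod 2) (y w : Fin q → ZMod 2) (s t : ZMod 2) :
    f (x, y) + f ((x, y) + (u, s • w)) + f ((x, y) + (u', t • w)) +
        f ((x, y) + (u, s • w) + (u', t • w)) =
      dotp (t • u + s • u') (φ (y + w) + φ y) := by
  rcases s.eq_zero_or_eq_one with rfl | rfl <;>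
    rcases t.eq_zero_or_eq_one with rfl | rfl <;>
    simp only [zero_smul, one_smul, add_zero, Prod.mk_add_mk, hf, dotp_add_left, dotp_add_right,
      dotp_zero_left, add_assoc, ZModModule.add_self] <;>
    ring_nf <;> reduce_mod_char

lemma IsMSub.secondDeriv_eq_zero (hf : ∀ x y, f (x, y) = dotp x (φ y) + h y)
    {V : Submodule (ZMod 2) ((Fin p → ZMod 2) × (Fin q → ZMod 2))} (hV : IsMSub f V)
    {a b : (Fin p → ZMod 2) × (Fin q → ZMod 2)} (ha : a ∈ V) (hb : b ∈ V) (y : Fin q → ZMod 2) :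
    φ y + φ (y + a.2) + φ (y + b.2) + φ (y + a.2 + b.2) = 0 := by
  refine eq_zero_of_forall_dotp_eq_zero fun x => ?_
  have hx := secondDeriv_eq_dotp_add hf x y a b
  rwa [hV a ha b hb, hV a ha b hb, add_zero, eq_comm] at hx

lemma IsMSub.map_snd_eq_span (hf : ∀ x y, f (x, y) = dotp x (φ y) + h y) (hφ : P1star φ)
    {V : Submodule (ZMod 2) ((Fin p → ZMod 2) × (Fin q → ZMod 2))} (hV : IsMSub f V)
    {c : Fin p → ZMod 2} {b : Fin q → ZMod 2} (hcb : (c, b) ∈ V) (hb : b ≠ 0) :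
    V.map (LinearMap.snd _ _ _) = Submodule.span (ZMod 2) {b} := by
  refine le_antisymm ?_ (Submodule.span_le.2 <| Set.singleton_subset_iff.2 ⟨_, hcb, rfl⟩)
  rintro _ ⟨⟨d, w⟩, hdw, rfl⟩
  have hdep : ¬ LinearIndependent (ZMod 2) ![b, w] := fun hli =>
    let ⟨y, hy⟩ := hφ b w hli
    hy (hV.secondDeriv_eq_zero hf hcb hdw y)
  rw [LinearIndependent.pair_iff' hb] at hdep
  push Not at hdep
  exact Submodule.mem_span_singleton.2 hdep

lemma IsMSub.dotp_deriv_eq_zero (hf : ∀ x y, f (x, y) = dotp x (φ y) + h y)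
    {V : Submodule (ZMod 2) ((Fin p → ZMod 2) × (Fin q → ZMod 2))} (hV : IsMSub f V)
    {u c : Fin p → ZMod 2} {b : Fin q → ZMod 2} (hu : (u, 0) ∈ V) (hcb : (c, b) ∈ V)
    (y : Fin q → ZMod 2) :
    dotp u (φ (y + b) + φ y) = 0 := by
  have hE := secondDeriv_smul_eq hf 0 u c y b 0 1
  simp only [zero_smul, one_smul, add_zero] at hE
  rw [← hE]
  exact hV _ hu _ hcb (0, y)

lemma isMSub_prod_span (hf : ∀ x y, f (x, y) = dotp x (φ y) + h y)
    {U : Submodule (ZMod 2) (Fin p → ZMod 2)} {b : Fin q → ZMod 2}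
    (hU : ∀ u ∈ U, ∀ y, dotp u (φ (y + b) + φ y) = 0) :
    IsMSub f (U.prod (Submodule.span (ZMod 2) {b})) := by
  rintro ⟨u, _⟩ ⟨hu, hs⟩ ⟨u', _⟩ ⟨hu', ht⟩ ⟨x, y⟩
  obtain ⟨s, rfl⟩ := Submodule.mem_span_singleton.1 hs
  obtain ⟨t, rfl⟩ := Submodule.mem_span_singleton.1 ht
  rw [secondDeriv_smul_eq hf]
  exact hU _ (U.add_mem (U.smul_mem t hu) (U.smul_mem s hu')) y

end Quadratic

theorem unique_canonical_MSub_iff_general {m k : ℕ} (hkm : k < m)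
    (φ : (Fin (m + k) → ZMod 2) → (Fin (m - k) → ZMod 2)) (hφ : P1star φ)
    (h : (Fin (m + k) → ZMod 2) → ZMod 2)
    (f : (Fin (m - k) → ZMod 2) × (Fin (m + k) → ZMod 2) → ZMod 2)
    (hf : ∀ x y, f (x, y) = dotp x (φ y) + h y) :
    (∀ V : Submodule (ZMod 2) ((Fin (m - k) → ZMod 2) × (Fin (m + k) → ZMod 2)),
        IsMSub f V → Module.finrank (ZMod 2) ↥V = m - k →
        V = Submodule.prod (⊤ : Submodule (ZMod 2) (Fin (m - k) → ZMod 2))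
              (⊥ : Submodule (ZMod 2) (Fin (m + k) → ZMod 2))) ↔
      ¬ ∃ b₂ : Fin (m + k) → ZMod 2, b₂ ≠ 0 ∧
          ∃ U : Submodule (ZMod 2) (Fin (m - k) → ZMod 2),
            Module.finrank (ZMod 2) ↥U = m - k - 1 ∧
            ∀ u ∈ U, ∀ y, dotp u (φ (y + b₂) + φ y) = 0 := by
  constructor
  · rintro huniq ⟨b, hb, U, hU, hUφ⟩
    have hdim := (U.prod (Submodule.span (ZMod 2) {b})).finrank_map_snd_add_finrank_comap_inl
    rw [Submodule.prod_map_snd, Submodule.prod_comap_inl, finrank_span_singleton hb, hU] at hdim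
    have hV := huniq _ (isMSub_prod_span hf hUφ) (by omega)
    have hb_mem : (0, b) ∈ U.prod (Submodule.span (ZMod 2) {b}) :=
      ⟨U.zero_mem, Submodule.mem_span_singleton_self b⟩
    rw [hV] at hb_mem
    exact hb hb_mem.2
  · intro hne V hV hVdim
    have hdim := V.finrank_map_snd_add_finrank_comap_inl
    by_cases hsnd : V.map (LinearMap.snd _ _ _) = ⊥
    · rw [hsnd, finrank_bot, zero_add, hVdim] at hdim
      rw [Submodule.eq_comap_inl_prod_bot hsnd,
        Submodule.eq_top_of_finrank_eq (hdim.trans (Module.finrank_fin_fun _).symm)]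
    · obtain ⟨_, ⟨⟨c, b⟩, hcb, rfl⟩, hb⟩ := Submodule.exists_mem_ne_zero_of_ne_bot hsnd
      replace hb : b ≠ 0 := hb
      rw [hV.map_snd_eq_span hf hφ hcb hb, finrank_span_singleton hb, hVdim] at hdim
      exact (hne ⟨b, hb, V.comap (LinearMap.inl _ _ _), by omega,
        fun u hu y => hV.dotp_deriv_eq_zero hf hu hcb y⟩).elim

/-- under `(P₁*)`, `F₂^{m-k} × {0}` is the unique M-subspace of `f` of
dimension `m-k` iff no nonzero `b₂` and `(m-k-1)`-dimensional `U` exist with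
`u · D_{b₂}φ(y) = 0` for all `u ∈ U` and all `y`. -/
theorem unique_canonical_MSub_iff {m k : ℕ} (hk : 0 < k) (hkm : k < m)
    (φ : (Fin (m + k) → ZMod 2) → (Fin (m - k) → ZMod 2)) (hφ : P1star φ)
    (h : (Fin (m + k) → ZMod 2) → ZMod 2)
    (f : (Fin (m - k) → ZMod 2) × (Fin (m + k) → ZMod 2) → ZMod 2)
    (hf : ∀ x y, f (x, y) = dotp x (φ y) + h y) :
    (∀ V : Submodule (ZMod 2) ((Fin (m - k) → ZMod 2) × (Fin (m + k) → ZMod 2)),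
        IsMSub f V → Module.finrank (ZMod 2) ↥V = m - k →
        V = Submodule.prod (⊤ : Submodule (ZMod 2) (Fin (m - k) → ZMod 2))
              (⊥ : Submodule (ZMod 2) (Fin (m + k) → ZMod 2))) ↔
      ¬ ∃ b₂ : Fin (m + k) → ZMod 2, b₂ ≠ 0 ∧
          ∃ U : Submodule (ZMod 2) (Fin (m - k) → ZMod 2),
            Module.finrank (ZMod 2) ↥U = m - k - 1 ∧
            ∀ u ∈ U, ∀ y, dotp u (φ (y + b₂) + φ y) = 0 :=
  unique_canonical_MSub_iff_general hkm φ hφ h f hf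
end

section
/- Fix two Boolean functions q, g : F₂^n → F₂ and let f = q ∥ g ∥ q ∥ (g+1) : F₂^{n+2} → F₂, i.e., f(x, 0,0)=q(x), f(x,0,1)=g(x), f(x,1,0)=q(x), f(x,1,1)=g(x)+1. If q and g are bent functions on F₂^n, then f is a bent function on F₂^{n+2}. -/
open Finset

/-- Walsh–Hadamard transform of a Boolean function on `F₂^p`. -/
def walsh {p : ℕ} (f : (Fin p → ZMod 2) → ZMod 2) (a : Fin p → ZMod 2) : ℤ :=
  ∑ x : Fin p → ZMod 2, chr (f x + dotp a x)

/-!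
Splitting the Walsh sum of `f` over the four cosets `F₂^n × {y}` expresses `W_f(a, b)` through
`W_q(a)` and `W_g(a)`, and `W_{g+1} = -W_g`. The characters of `b` then make the two copies of `q`
cancel when `b₀ = 1` and the `g`-parts cancel when `b₀ = 0`, so `W_f(a, b)` is `2 W_q(a)` or
`±2 W_g(a)`, hence `±2^{k+1}`.
-/

lemma chr_add (u v : ZMod 2) : chr (u + v) = chr u * chr v := by
  revert u v; decide

@[simp] lemma chr_zero : chr 0 = 1 := rfl

@[simp] lemma chr_one : chr 1 = -1 := rfl

lemma walsh_add_one {p : ℕ} (g : (Fin p → ZMod 2) → ZMod 2) (a : Fin p → ZMod 2) :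
    walsh (fun x => g x + 1) a = -walsh g a := by
  simp only [walsh, add_right_comm _ (1 : ZMod 2), chr_add _ 1, chr_one, mul_neg_one,
    sum_neg_distrib]

lemma walshP_eq_sum_walsh_mul_chr {p q : ℕ}
    (f : (Fin p → ZMod 2) × (Fin q → ZMod 2) → ZMod 2)
    (a : Fin p → ZMod 2) (b : Fin q → ZMod 2) :
    walshP f a b = ∑ y, walsh (fun x => f (x, y)) a * chr (dotp b y) := by
  rw [walshP, sum_comm]
  simp only [walsh, sum_mul, chr_add]

lemma sum_fin_two_zmod_two {M : Type*} [AddCommMonoid M] (F : (Fin 2 → ZMod 2) → M) :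
    ∑ y, F y = F ![0, 0] + F ![0, 1] + F ![1, 0] + F ![1, 1] := by
  have huniv : (univ : Finset (Fin 2 → ZMod 2)) = {![0, 0], ![0, 1], ![1, 0], ![1, 1]} := by
    decide
  rw [huniv, sum_insert (by decide), sum_insert (by decide), sum_insert (by decide),
    sum_singleton]
  abel

lemma chr_eq_one_or_neg_one (z : ZMod 2) : chr z = 1 ∨ chr z = -1 := by
  revert z; decide

lemma chr_mul_eq_pow_or_neg {w : ℤ} {n : ℕ} (z : ZMod 2) (hw : w = 2 ^ n ∨ w = -2 ^ n) :
    chr z * w = 2 ^ n ∨ chr z * w = -2 ^ n := by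
  rcases chr_eq_one_or_neg_one z with h | h <;> rcases hw with hw | hw <;> simp [h, hw]

lemma two_mul_eq_pow_succ_or_neg {w : ℤ} {n : ℕ} (hw : w = 2 ^ n ∨ w = -2 ^ n) :
    2 * w = 2 ^ (n + 1) ∨ 2 * w = -2 ^ (n + 1) := by
  rcases hw with hw | hw <;> simp [hw, pow_succ, mul_comm]

lemma walshP_concat_qgq_g1 {p : ℕ} (q g : (Fin p → ZMod 2) → ZMod 2)
    (f : (Fin p → ZMod 2) × (Fin 2 → ZMod 2) → ZMod 2)
    (hc₁ : ∀ x, f (x, ![0, 0]) = q x) (hc₂ : ∀ x, f (x, ![0, 1]) = g x)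
    (hc₃ : ∀ x, f (x, ![1, 0]) = q x) (hc₄ : ∀ x, f (x, ![1, 1]) = g x + 1)
    (a : Fin p → ZMod 2) (b : Fin 2 → ZMod 2) :
    walshP f a b = if b 0 = 0 then 2 * walsh q a else chr (b 1) * (2 * walsh g a) := by
  have h₁ : (fun x => f (x, ![0, 0])) = q := funext hc₁
  have h₂ : (fun x => f (x, ![0, 1])) = g := funext hc₂
  have h₃ : (fun x => f (x, ![1, 0])) = q := funext hc₃
  have h₄ : (fun x => f (x, ![1, 1])) = fun x => g x + 1 := funext hc₄
  rw [walshP_eq_sum_walsh_mul_chr, sum_fin_two_zmod_two, h₁, h₂, h₃, h₄, walsh_add_one]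
  have hb : b 0 = 0 ∨ b 0 = 1 := by generalize b 0 = z; revert z; decide
  rcases hb with hb | hb <;>
    simp [dotp, Fin.sum_univ_two, hb, chr_add] <;> ring

/-- if `q` and `g` are bent on `F₂^{2k}`, then the concatenation
`f = q ‖ g ‖ q ‖ (g+1)` is bent on `F₂^{2k+2}`. -/
theorem concat_qgq_g1_bent {k : ℕ}
    (q g : (Fin (2 * k) → ZMod 2) → ZMod 2)
    (hq : ∀ w, walsh q w = 2 ^ k ∨ walsh q w = -(2 ^ k))
    (hg : ∀ w, walsh g w = 2 ^ k ∨ walsh g w = -(2 ^ k))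
    (f : (Fin (2 * k) → ZMod 2) × (Fin 2 → ZMod 2) → ZMod 2)
    (hc₁ : ∀ x, f (x, ![0, 0]) = q x)
    (hc₂ : ∀ x, f (x, ![0, 1]) = g x)
    (hc₃ : ∀ x, f (x, ![1, 0]) = q x)
    (hc₄ : ∀ x, f (x, ![1, 1]) = g x + 1) :
    ∀ a b, walshP f a b = 2 ^ (k + 1) ∨ walshP f a b = -(2 ^ (k + 1)) := by
  intro a b
  rw [walshP_concat_qgq_g1 q g f hc₁ hc₂ hc₃ hc₄]
  split_ifs
  · exact two_mul_eq_pow_succ_or_neg (hq a)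
  · exact chr_mul_eq_pow_or_neg (b 1) (two_mul_eq_pow_succ_or_neg (hg a))
end
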